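/- (Lipschitzness of the backstepping feedback functional.) Let B_β, B_u > 0. For continuous β, u : [0,1] → ℝ, let K(β) denote the continuous solution of the backstepping kernel equation k(x) = −β(x) + ∫₀ˣ β(x−y) k(y) dy, and define the feedback functional U(β,u) = ∫₀¹ K(β)(1−y) u(y) dy. Then for all continuous β₁, β₂, u₁, u₂ with ‖β₁‖_∞, ‖β₂‖_∞ ≤ B_β and ‖u₁‖_∞, ‖u₂‖_∞ ≤ B_u, |U(β₁,u₁) − U(β₂,u₂)| ≤ (B_β e^{B_β} + B_u e^{3B_β}) · max(‖β₁ − β₂‖_∞, ‖u₁ − u₂‖_∞). -/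
import Mathlib

open MeasureTheory

/-- supremum norm on C⁰[0,1] -/
noncomputable def supNorm (f : ℝ → ℝ) : ℝ := sSup ((fun x => |f x|) '' Set.Icc 0 1)

lemma abs_le_supNorm {f : ℝ → ℝ} (hf : ContinuousOn f (Set.Icc 0 1)) {x : ℝ}
    (hx : x ∈ Set.Icc (0:ℝ) 1) : |f x| ≤ supNorm f := by
  have hbdd : BddAbove ((fun x => |f x|) '' Set.Icc 0 1) :=
    (isCompact_Icc.image_of_continuousOn (continuous_abs.comp_continuousOn hf)).bddAbove
  exact le_csSup hbdd (Set.mem_image_of_mem _ hx)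

lemma supNorm_nonneg {f : ℝ → ℝ} (hf : ContinuousOn f (Set.Icc 0 1)) : 0 ≤ supNorm f :=
  le_trans (abs_nonneg _) (abs_le_supNorm hf (by norm_num : (0:ℝ) ∈ Set.Icc (0:ℝ) 1))

/-- clamped version of a function -/
noncomputable def clamp (f : ℝ → ℝ) : ℝ → ℝ := fun x => f (max 0 (min 1 x))

lemma clamp_continuous {f : ℝ → ℝ} (hf : ContinuousOn f (Set.Icc 0 1)) :
    Continuous (clamp f) := by
  apply hf.comp_continuous (continuous_const.max (continuous_const.min continuous_id))
  intro x
  constructor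
  · exact le_max_left _ _
  · exact max_le (by norm_num) (min_le_left _ _)

lemma clamp_eq {f : ℝ → ℝ} {x : ℝ} (hx : x ∈ Set.Icc (0:ℝ) 1) : clamp f x = f x := by
  unfold clamp
  rw [min_eq_right hx.2, max_eq_right hx.1]

/-- Grönwall for continuous functions -/
lemma gronwall_cont {k : ℝ → ℝ} (hk : Continuous k) {B C : ℝ} (hB : 0 ≤ B) (hC : 0 < C)
    (h : ∀ x ∈ Set.Icc (0:ℝ) 1, |k x| ≤ B + C * ∫ y in (0:ℝ)..x, |k y|) :
    ∀ x ∈ Set.Icc (0:ℝ) 1, |k x| ≤ B * Real.exp (C * x) := by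
  set g : ℝ → ℝ := fun x => ∫ y in (0:ℝ)..x, |k y| with hgdef
  have hka : Continuous fun y => |k y| := hk.abs
  have hderiv : ∀ b : ℝ, HasDerivAt g (|k b|) b := fun b =>
    intervalIntegral.integral_hasDerivAt_right (hka.intervalIntegrable _ _)
      (hka.stronglyMeasurableAtFilter _ _) hka.continuousAt
  have hgnonneg : ∀ x ∈ Set.Icc (0:ℝ) 1, 0 ≤ g x := fun x hx =>
    intervalIntegral.integral_nonneg hx.1 (fun y _ => abs_nonneg _)
  have key := norm_le_gronwallBound_of_norm_deriv_right_le
    (f := g) (f' := fun x => |k x|) (δ := 0) (K := C) (ε := B) (a := 0) (b := 1)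
    (fun x _ => (hderiv x).continuousAt.continuousWithinAt)
    (fun x _ => (hderiv x).hasDerivWithinAt)
    (by simp [hgdef])
    (fun x hx => by
      have hx' : x ∈ Set.Icc (0:ℝ) 1 := ⟨hx.1, hx.2.le⟩
      rw [Real.norm_eq_abs, Real.norm_eq_abs, abs_abs, abs_of_nonneg (hgnonneg x hx')]
      linarith [h x hx'])
  intro x hx
  have hgb := key x hx
  rw [Real.norm_eq_abs, abs_of_nonneg (hgnonneg x hx), sub_zero,
    gronwallBound_of_K_ne_0 hC.ne'] at hgb
  have h2 := h x hx
  have hCg : C * g x ≤ C * (0 * Real.exp (C * x) + B / C * (Real.exp (C * x) - 1)) :=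
    mul_le_mul_of_nonneg_left hgb hC.le
  have hcne : C ≠ 0 := hC.ne'
  calc |k x| ≤ B + C * g x := h2
    _ ≤ B + C * (0 * Real.exp (C * x) + B / C * (Real.exp (C * x) - 1)) := by linarith
    _ = B * Real.exp (C * x) := by field_simp; ring

/-- Grönwall for functions continuous on [0,1] only -/
lemma gronwall_on {k : ℝ → ℝ} (hk : ContinuousOn k (Set.Icc 0 1)) {B C : ℝ} (hB : 0 ≤ B)
    (hC : 0 < C)
    (h : ∀ x ∈ Set.Icc (0:ℝ) 1, |k x| ≤ B + C * ∫ y in (0:ℝ)..x, |k y|) :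
    ∀ x ∈ Set.Icc (0:ℝ) 1, |k x| ≤ B * Real.exp (C * x) := by
  have hint : ∀ x ∈ Set.Icc (0:ℝ) 1,
      (∫ y in (0:ℝ)..x, |k y|) = ∫ y in (0:ℝ)..x, |clamp k y| := by
    intro x hx
    apply intervalIntegral.integral_congr
    intro y hy
    rw [Set.uIcc_of_le hx.1] at hy
    show |k y| = |clamp k y|
    rw [clamp_eq ⟨hy.1, hy.2.trans hx.2⟩]
  have h' : ∀ x ∈ Set.Icc (0:ℝ) 1, |clamp k x| ≤ B + C * ∫ y in (0:ℝ)..x, |clamp k y| := by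
    intro x hx
    rw [clamp_eq hx, ← hint x hx]
    exact h x hx
  intro x hx
  have := gronwall_cont (clamp_continuous hk) hB hC h' x hx
  rwa [clamp_eq hx] at this

lemma conv_integrable {β k : ℝ → ℝ} (hβ : ContinuousOn β (Set.Icc 0 1))
    (hk : ContinuousOn k (Set.Icc 0 1)) {x : ℝ} (hx : x ∈ Set.Icc (0:ℝ) 1) :
    IntervalIntegrable (fun y => β (x - y) * k y) volume 0 x := by
  apply ContinuousOn.intervalIntegrable
  rw [Set.uIcc_of_le hx.1]
  apply ContinuousOn.mul
  · apply hβ.comp (continuous_const.sub continuous_id).continuousOn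
    intro y hy
    exact ⟨by simp at hy ⊢; linarith [hy.2, hx.2], by simp at hy ⊢; linarith [hy.1, hx.2]⟩
  · exact hk.mono (Set.Icc_subset_Icc le_rfl hx.2)

lemma abs_integrable {k : ℝ → ℝ} (hk : ContinuousOn k (Set.Icc 0 1)) {x : ℝ}
    (hx : x ∈ Set.Icc (0:ℝ) 1) : IntervalIntegrable (fun y => |k y|) volume 0 x := by
  apply ContinuousOn.intervalIntegrable
  rw [Set.uIcc_of_le hx.1]
  exact continuous_abs.comp_continuousOn (hk.mono (Set.Icc_subset_Icc le_rfl hx.2))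

/-- bound on the kernel -/
lemma kernel_bound {β k : ℝ → ℝ} (hβ : ContinuousOn β (Set.Icc 0 1))
    (hk : ContinuousOn k (Set.Icc 0 1)) {Bβ : ℝ} (hBβ : 0 < Bβ) (hβB : supNorm β ≤ Bβ)
    (heq : ∀ x ∈ Set.Icc (0:ℝ) 1, k x = -β x + ∫ y in (0:ℝ)..x, β (x - y) * k y) :
    ∀ x ∈ Set.Icc (0:ℝ) 1, |k x| ≤ Bβ * Real.exp Bβ := by
  have main : ∀ x ∈ Set.Icc (0:ℝ) 1, |k x| ≤ Bβ + Bβ * ∫ y in (0:ℝ)..x, |k y| := by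
    intro x hx
    rw [heq x hx]
    have h1 : |∫ y in (0:ℝ)..x, β (x - y) * k y| ≤ ∫ y in (0:ℝ)..x, |β (x - y) * k y| :=
      intervalIntegral.abs_integral_le_integral_abs hx.1
    have h2 : (∫ y in (0:ℝ)..x, |β (x - y) * k y|) ≤ ∫ y in (0:ℝ)..x, Bβ * |k y| := by
      apply intervalIntegral.integral_mono_on hx.1 (conv_integrable hβ hk hx).abs
        ((abs_integrable hk hx).const_mul Bβ)
      intro y hy
      rw [abs_mul]
      apply mul_le_mul_of_nonneg_right _ (abs_nonneg _)
      exact le_trans (abs_le_supNorm hβ ⟨by linarith [hy.1, hy.2, hx.2],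
        by linarith [hy.1, hx.2]⟩) hβB
    rw [intervalIntegral.integral_const_mul] at h2
    have h3 : |β x| ≤ Bβ := le_trans (abs_le_supNorm hβ hx) hβB
    calc |(-β x + ∫ y in (0:ℝ)..x, β (x - y) * k y)|
        ≤ |β x| + |∫ y in (0:ℝ)..x, β (x - y) * k y| :=
          (abs_add_le _ _).trans (le_of_eq (by rw [abs_neg]))
      _ ≤ Bβ + Bβ * ∫ y in (0:ℝ)..x, |k y| := by linarith
  intro x hx
  have := gronwall_on hk hBβ.le hBβ main x hx
  refine this.trans ?_
  apply mul_le_mul_of_nonneg_left _ hBβ.le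
  exact Real.exp_le_exp.2 (by nlinarith [hx.2, hBβ])

lemma kernel_diff_bound {β₁ β₂ k₁ k₂ : ℝ → ℝ}
    (hβ₁ : ContinuousOn β₁ (Set.Icc 0 1)) (hβ₂ : ContinuousOn β₂ (Set.Icc 0 1))
    (hk₁ : ContinuousOn k₁ (Set.Icc 0 1)) (hk₂ : ContinuousOn k₂ (Set.Icc 0 1))
    {Bβ : ℝ} (hBβ : 0 < Bβ) (hβ₁B : supNorm β₁ ≤ Bβ) (hβ₂B : supNorm β₂ ≤ Bβ)
    (heq₁ : ∀ x ∈ Set.Icc (0:ℝ) 1,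
      k₁ x = -β₁ x + ∫ y in (0:ℝ)..x, β₁ (x - y) * k₁ y)
    (heq₂ : ∀ x ∈ Set.Icc (0:ℝ) 1,
      k₂ x = -β₂ x + ∫ y in (0:ℝ)..x, β₂ (x - y) * k₂ y) :
    ∀ x ∈ Set.Icc (0:ℝ) 1,
      |k₁ x - k₂ x| ≤ Real.exp (3 * Bβ) * supNorm (fun x => β₁ x - β₂ x) := by
  have hk1b := kernel_bound hβ₁ hk₁ hBβ hβ₁B heq₁
  set Dβ := supNorm (fun x => β₁ x - β₂ x) with hDβdef
  have hβd : ContinuousOn (fun x => β₁ x - β₂ x) (Set.Icc 0 1) := hβ₁.sub hβ₂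
  have hDβ0 : 0 ≤ Dβ := supNorm_nonneg hβd
  have hDβle : ∀ z ∈ Set.Icc (0:ℝ) 1, |β₁ z - β₂ z| ≤ Dβ := fun z hz => abs_le_supNorm hβd hz
  set E := Real.exp Bβ with hEdef
  have hE1 : 1 ≤ E := Real.one_le_exp hBβ.le
  have hkd : ContinuousOn (fun x => k₁ x - k₂ x) (Set.Icc 0 1) := hk₁.sub hk₂
  have main : ∀ x ∈ Set.Icc (0:ℝ) 1,
      |k₁ x - k₂ x| ≤ Dβ * (1 + Bβ * E) + Bβ * ∫ y in (0:ℝ)..x, |k₁ y - k₂ y| := by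
    intro x hx
    have hsplit : k₁ x - k₂ x = -(β₁ x - β₂ x) +
        ∫ y in (0:ℝ)..x, (β₁ (x - y) * k₁ y - β₂ (x - y) * k₂ y) := by
      rw [heq₁ x hx, heq₂ x hx,
        intervalIntegral.integral_sub (conv_integrable hβ₁ hk₁ hx) (conv_integrable hβ₂ hk₂ hx)]
      ring
    have hintle : (∫ y in (0:ℝ)..x, |β₁ (x - y) * k₁ y - β₂ (x - y) * k₂ y|) ≤
        ∫ y in (0:ℝ)..x, (Dβ * (Bβ * E) + Bβ * |k₁ y - k₂ y|) := by
      apply intervalIntegral.integral_mono_on hx.1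
        ((conv_integrable hβ₁ hk₁ hx).sub (conv_integrable hβ₂ hk₂ hx)).abs
        (intervalIntegrable_const.add ((abs_integrable hkd hx).const_mul Bβ))
      intro y hy
      have hy1 : y ∈ Set.Icc (0:ℝ) 1 := ⟨hy.1, hy.2.trans hx.2⟩
      have hxy : x - y ∈ Set.Icc (0:ℝ) 1 := ⟨by linarith [hy.2], by linarith [hy.1, hx.2]⟩
      have e1 : β₁ (x - y) * k₁ y - β₂ (x - y) * k₂ y =
          (β₁ (x - y) - β₂ (x - y)) * k₁ y + β₂ (x - y) * (k₁ y - k₂ y) := by ring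
      rw [e1]
      calc |(β₁ (x - y) - β₂ (x - y)) * k₁ y + β₂ (x - y) * (k₁ y - k₂ y)|
          ≤ |(β₁ (x - y) - β₂ (x - y))| * |k₁ y| + |β₂ (x - y)| * |k₁ y - k₂ y| := by
            rw [← abs_mul, ← abs_mul]; exact abs_add_le _ _
        _ ≤ Dβ * (Bβ * E) + Bβ * |k₁ y - k₂ y| := by
            have := hDβle (x - y) hxy
            have := hk1b y hy1
            have := abs_le_supNorm hβ₂ hxy
            have := abs_nonneg (k₁ y)
            have := abs_nonneg (k₁ y - k₂ y)
            nlinarith [hβ₂B]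
    rw [intervalIntegral.integral_add intervalIntegrable_const
      ((abs_integrable hkd hx).const_mul Bβ), intervalIntegral.integral_const,
      intervalIntegral.integral_const_mul] at hintle
    have habs : |k₁ x - k₂ x| ≤ |β₁ x - β₂ x| +
        |∫ y in (0:ℝ)..x, (β₁ (x - y) * k₁ y - β₂ (x - y) * k₂ y)| := by
      rw [hsplit]
      exact (abs_add_le _ _).trans (le_of_eq (by rw [abs_neg]))
    have h1 : |∫ y in (0:ℝ)..x, (β₁ (x - y) * k₁ y - β₂ (x - y) * k₂ y)| ≤
        ∫ y in (0:ℝ)..x, |β₁ (x - y) * k₁ y - β₂ (x - y) * k₂ y| :=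
      intervalIntegral.abs_integral_le_integral_abs hx.1
    have h2 := hDβle x hx
    have hEpos : (0:ℝ) < E := lt_of_lt_of_le one_pos hE1
    have hsm : (x - 0) • (Dβ * (Bβ * E)) ≤ Dβ * (Bβ * E) := by
      rw [smul_eq_mul]
      nlinarith [mul_nonneg (sub_nonneg.2 hx.2) (mul_nonneg hDβ0 (mul_nonneg hBβ.le hEpos.le)),
        mul_nonneg hx.1 (mul_nonneg hDβ0 (mul_nonneg hBβ.le hEpos.le))]
    linarith
  intro x hx
  have hB0 : 0 ≤ Dβ * (1 + Bβ * E) := mul_nonneg hDβ0 (by nlinarith [hE1, hBβ])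
  have := gronwall_on hkd hB0 hBβ main x hx
  refine this.trans ?_
  have he3 : Real.exp (3 * Bβ) = E ^ 3 := by
    rw [hEdef, ← Real.exp_nat_mul]; norm_num
  have hex : Real.exp (Bβ * x) ≤ E := Real.exp_le_exp.2 (by nlinarith [hx.2, hBβ])
  have hexpos : (0:ℝ) < Real.exp (Bβ * x) := Real.exp_pos _
  have hBE : Bβ + 1 ≤ E := by rw [hEdef]; exact Real.add_one_le_exp Bβ
  rw [he3]
  have h12 : 1 + Bβ * E ≤ E ^ 2 := by nlinarith [hBE, hE1]
  calc Dβ * (1 + Bβ * E) * Real.exp (Bβ * x) ≤ Dβ * (1 + Bβ * E) * E :=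
        mul_le_mul_of_nonneg_left hex hB0
    _ ≤ Dβ * E ^ 2 * E :=
        mul_le_mul_of_nonneg_right (mul_le_mul_of_nonneg_left h12 hDβ0) (by linarith)
    _ = E ^ 3 * Dβ := by ring

/-- Lipschitzness of the backstepping feedback functional:
|U(β₁,u₁) − U(β₂,u₂)| ≤ (B_β e^{B_β} + B_u e^{3B_β}) max(‖β₁ − β₂‖_∞, ‖u₁ − u₂‖_∞),
where U(β,u) = ∫₀¹ K(β)(1−y) u(y) dy and K(β) is the backstepping kernel of β. -/
theorem feedback_functional_lipschitz (Bβ Bu : ℝ) (hBβ : 0 < Bβ) (hBu : 0 < Bu)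
    (β₁ β₂ u₁ u₂ k₁ k₂ : ℝ → ℝ)
    (hβ₁ : ContinuousOn β₁ (Set.Icc 0 1))
    (hβ₂ : ContinuousOn β₂ (Set.Icc 0 1))
    (hu₁ : ContinuousOn u₁ (Set.Icc 0 1))
    (hu₂ : ContinuousOn u₂ (Set.Icc 0 1))
    (hβ₁B : supNorm β₁ ≤ Bβ) (hβ₂B : supNorm β₂ ≤ Bβ)
    (hu₁B : supNorm u₁ ≤ Bu) (hu₂B : supNorm u₂ ≤ Bu)
    (hk₁ : ContinuousOn k₁ (Set.Icc 0 1))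
    (hk₂ : ContinuousOn k₂ (Set.Icc 0 1))
    (heq₁ : ∀ x ∈ Set.Icc (0:ℝ) 1,
      k₁ x = -β₁ x + ∫ y in (0:ℝ)..x, β₁ (x - y) * k₁ y)
    (heq₂ : ∀ x ∈ Set.Icc (0:ℝ) 1,
      k₂ x = -β₂ x + ∫ y in (0:ℝ)..x, β₂ (x - y) * k₂ y) :
    |(∫ y in (0:ℝ)..1, k₁ (1 - y) * u₁ y) - ∫ y in (0:ℝ)..1, k₂ (1 - y) * u₂ y| ≤
      (Bβ * Real.exp Bβ + Bu * Real.exp (3 * Bβ)) *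
        max (supNorm (fun x => β₁ x - β₂ x)) (supNorm (fun x => u₁ x - u₂ x)) := by
  set Dβ := supNorm (fun x => β₁ x - β₂ x) with hDβdef
  set Du := supNorm (fun x => u₁ x - u₂ x) with hDudef
  have hud : ContinuousOn (fun x => u₁ x - u₂ x) (Set.Icc 0 1) := hu₁.sub hu₂
  have hDβ0 : 0 ≤ Dβ := supNorm_nonneg (hβ₁.sub hβ₂)
  have hDu0 : 0 ≤ Du := supNorm_nonneg hud
  have hk2b := kernel_bound hβ₂ hk₂ hBβ hβ₂B heq₂
  have hkdb := kernel_diff_bound hβ₁ hβ₂ hk₁ hk₂ hBβ hβ₁B hβ₂B heq₁ heq₂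
  have hmaps : Set.MapsTo (fun y => 1 - y) (Set.Icc (0:ℝ) 1) (Set.Icc (0:ℝ) 1) := by
    intro y hy
    simp only [Set.mem_Icc] at hy ⊢
    constructor <;> linarith [hy.1, hy.2]
  have hrefl : (Set.Icc (0:ℝ) 1) ⊆ Set.Icc (0:ℝ) 1 := le_rfl
  have hf₁ : IntervalIntegrable (fun y => k₁ (1 - y) * u₁ y) volume 0 1 := by
    apply ContinuousOn.intervalIntegrable
    rw [Set.uIcc_of_le (by norm_num : (0:ℝ) ≤ 1)]
    exact ((hk₁.comp (continuous_const.sub continuous_id).continuousOn hmaps).mul hu₁)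
  have hf₂ : IntervalIntegrable (fun y => k₂ (1 - y) * u₂ y) volume 0 1 := by
    apply ContinuousOn.intervalIntegrable
    rw [Set.uIcc_of_le (by norm_num : (0:ℝ) ≤ 1)]
    exact ((hk₂.comp (continuous_const.sub continuous_id).continuousOn hmaps).mul hu₂)
  rw [← intervalIntegral.integral_sub hf₁ hf₂]
  have hbound : ∀ y ∈ Set.uIoc (0:ℝ) 1,
      ‖k₁ (1 - y) * u₁ y - k₂ (1 - y) * u₂ y‖ ≤
        Bu * (Real.exp (3 * Bβ) * Dβ) + Bβ * Real.exp Bβ * Du := by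
    intro y hy
    rw [Set.uIoc_of_le (by norm_num : (0:ℝ) ≤ 1)] at hy
    have hy1 : y ∈ Set.Icc (0:ℝ) 1 := ⟨hy.1.le, hy.2⟩
    have hyc : 1 - y ∈ Set.Icc (0:ℝ) 1 := hmaps hy1
    have e1 : k₁ (1 - y) * u₁ y - k₂ (1 - y) * u₂ y =
        (k₁ (1 - y) - k₂ (1 - y)) * u₁ y + k₂ (1 - y) * (u₁ y - u₂ y) := by ring
    rw [Real.norm_eq_abs, e1]
    have h1 := hkdb (1 - y) hyc
    have h2 := hk2b (1 - y) hyc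
    have h3 : |u₁ y| ≤ Bu := (abs_le_supNorm hu₁ hy1).trans hu₁B
    have h4 : |u₁ y - u₂ y| ≤ Du := abs_le_supNorm hud hy1
    calc |(k₁ (1 - y) - k₂ (1 - y)) * u₁ y + k₂ (1 - y) * (u₁ y - u₂ y)|
        ≤ |k₁ (1 - y) - k₂ (1 - y)| * |u₁ y| + |k₂ (1 - y)| * |u₁ y - u₂ y| := by
          rw [← abs_mul, ← abs_mul]; exact abs_add_le _ _
      _ ≤ Real.exp (3 * Bβ) * Dβ * Bu + Bβ * Real.exp Bβ * Du := by
          have := abs_nonneg (u₁ y)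
          have := abs_nonneg (u₁ y - u₂ y)
          have := abs_nonneg (k₂ (1 - y))
          have := abs_nonneg (k₁ (1 - y) - k₂ (1 - y))
          have hE3 := (Real.exp_pos (3 * Bβ)).le
          have hE1 := (Real.exp_pos Bβ).le
          have : 0 ≤ Real.exp (3 * Bβ) * Dβ := mul_nonneg hE3 hDβ0
          nlinarith [mul_le_mul h1 h3 (abs_nonneg _) (by assumption),
            mul_le_mul h2 h4 (abs_nonneg _) (mul_nonneg hBβ.le hE1)]
      _ = Bu * (Real.exp (3 * Bβ) * Dβ) + Bβ * Real.exp Bβ * Du := by ring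
  have := intervalIntegral.norm_integral_le_of_norm_le_const hbound
  rw [Real.norm_eq_abs] at this
  refine this.trans ?_
  have hDβM : Dβ ≤ max Dβ Du := le_max_left _ _
  have hDuM : Du ≤ max Dβ Du := le_max_right _ _
  have hM0 : 0 ≤ max Dβ Du := le_trans hDβ0 hDβM
  have hE3 := (Real.exp_pos (3 * Bβ)).le
  have hE1 := (Real.exp_pos Bβ).le
  have hc1 : Bu * (Real.exp (3 * Bβ) * Dβ) ≤ Bu * Real.exp (3 * Bβ) * max Dβ Du := by
    rw [← mul_assoc]
    exact mul_le_mul_of_nonneg_left hDβM (mul_nonneg hBu.le hE3)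
  have hc2 : Bβ * Real.exp Bβ * Du ≤ Bβ * Real.exp Bβ * max Dβ Du :=
    mul_le_mul_of_nonneg_left hDuM (mul_nonneg hBβ.le hE1)
  have : |1 - (0:ℝ)| = 1 := by norm_num
  rw [this, mul_one]
  nlinarith [hc1, hc2]
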